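/- For the single-segment drying equation with unknown speed u > 0: (d_crit - d_p)/d_s = W(exp(C - (R/d_s)·(B(Δx)/u))), where B(Δx) > 0, R > 0, d_s > 0, and d_p < d_crit < d_0 (with C determined by d_0), there exists a unique solution u > 0 if and only if C > ln((d_crit - d_p)/d_s) + (d_crit - d_p)/d_s. -/

import Mathlib

private lemma texp_inj {a b : ℝ} (ha : 0 ≤ a) (hb : 0 ≤ b)
    (h : a * Real.exp a = b * Real.exp b) : a = b := by
  rcases lt_trichotomy a b with hlt | he | hgt
  · exfalso
    have : a * Real.exp a < b * Real.exp b :=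
      calc a * Real.exp a ≤ a * Real.exp b := by
            exact mul_le_mul_of_nonneg_left (Real.exp_le_exp.mpr hlt.le) ha
        _ < b * Real.exp b := by
            exact mul_lt_mul_of_pos_right hlt (Real.exp_pos b)
    linarith
  · exact he
  · exfalso
    have : b * Real.exp b < a * Real.exp a :=
      calc b * Real.exp b ≤ b * Real.exp a := by
            exact mul_le_mul_of_nonneg_left (Real.exp_le_exp.mpr hgt.le) hb
        _ < a * Real.exp a := by
            exact mul_lt_mul_of_pos_right hgt (Real.exp_pos a)
    linarith

/-- For the single-segment drying equation with unknown speed u > 0,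
(d_crit - d_p)/d_s = W(exp(C - (R/d_s)·(B(Δx)/u))) with B(Δx) > 0, R > 0,
d_s > 0, d_p < d_crit < d_0 and C = ln((d_0-d_p)/d_s) + (d_0-d_p)/d_s, there
exists a unique solution u > 0 if and only if
C > ln((d_crit - d_p)/d_s) + (d_crit - d_p)/d_s. W is the principal Lambert W
function, hypothesized as a strictly increasing map on [0,∞) with its defining
equation. -/
theorem stmt_9 (dp ds R d0 dcrit BΔ C : ℝ)
    (hdp : 0 ≤ dp) (hds : 0 < ds) (hR : 0 < R) (hBΔ : 0 < BΔ)
    (h1 : dp < dcrit) (h2 : dcrit < d0)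
    (hC : C = Real.log ((d0 - dp) / ds) + (d0 - dp) / ds)
    (W : ℝ → ℝ) (hW : ∀ x, 0 ≤ x → W x * Real.exp (W x) = x)
    (hWpos : ∀ x, 0 ≤ x → 0 ≤ W x)
    (hWmono : StrictMonoOn W (Set.Ici 0)) :
    (∃! u : ℝ, 0 < u ∧
        (dcrit - dp) / ds = W (Real.exp (C - (R / ds) * (BΔ / u)))) ↔
      C > Real.log ((dcrit - dp) / ds) + (dcrit - dp) / ds := by
  set y : ℝ := (dcrit - dp) / ds with hy_def
  have hy : 0 < y := div_pos (by linarith) hds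
  -- key equivalence for each u > 0
  have key : ∀ u : ℝ, 0 < u →
      (y = W (Real.exp (C - (R / ds) * (BΔ / u))) ↔
        Real.log y + y = C - (R / ds) * (BΔ / u)) := by
    intro u hu
    set t : ℝ := C - (R / ds) * (BΔ / u) with ht
    have hx : (0:ℝ) ≤ Real.exp t := (Real.exp_pos t).le
    constructor
    · intro h
      have h2 : y * Real.exp y = Real.exp t := by
        rw [h]; exact hW _ hx
      have : Real.exp (Real.log y + y) = Real.exp t := by
        rw [Real.exp_add, Real.exp_log hy, h2]
      exact Real.exp_injective this
    · intro h
      have h2 : y * Real.exp y = Real.exp t := by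
        rw [← h, Real.exp_add, Real.exp_log hy]
      have h3 : W (Real.exp t) * Real.exp (W (Real.exp t)) = y * Real.exp y := by
        rw [hW _ hx, h2]
      exact (texp_inj (hWpos _ hx) hy.le h3).symm
  constructor
  · rintro ⟨u, ⟨hu, heq⟩, -⟩
    have h := (key u hu).mp heq
    have hpos : 0 < (R / ds) * (BΔ / u) :=
      mul_pos (div_pos hR hds) (div_pos hBΔ hu)
    linarith
  · intro hgt
    set D : ℝ := C - (Real.log y + y) with hD
    have hDpos : 0 < D := by simp [hD]; linarith
    refine ⟨(R / ds) * BΔ / D, ⟨?_, ?_⟩, ?_⟩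
    · exact div_pos (mul_pos (div_pos hR hds) hBΔ) hDpos
    · rw [key _ (div_pos (mul_pos (div_pos hR hds) hBΔ) hDpos)]
      have : (R / ds) * (BΔ / ((R / ds) * BΔ / D)) = D := by
        field_simp
      rw [this]; simp [hD]
    · rintro u' ⟨hu', heq'⟩
      have h := (key u' hu').mp heq'
      have hDu : (R / ds) * (BΔ / u') = D := by simp [hD]; linarith
      have : u' = (R / ds) * BΔ / D := by
        rw [← hDu]
        field_simp
      exact this
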